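/- With N = 2^t, ω = e^{πi/N}, and the diagonal operators CP_N(q,v) acting on basis states by CP_N(q,v)|e⟩ = ω^{q·p_v(e)}|e⟩ and RP_N(q,v)|e⟩ = ω^{q·s_v(e)}|e⟩, the duality RP_N(2,v) = ∏_{0 ≠ u ≼ v} CP_N(2·(−2)^{wt(u)−1} mod 2N, u) holds, where u ≼ v means supp(u) ⊆ supp(v). -/

import Mathlib

open Finset

noncomputable section

variable {n : ℕ}

/-- Hamming weight. -/
def wt (v : Fin n → ZMod 2) : ℕ := (univ.filter (fun i => v i = 1)).card

/-- `p_v(e) = ∏_{i ∈ supp(v)} e[i]` as an integer in {0,1}. -/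
def pFun (v e : Fin n → ZMod 2) : ℤ := ∏ i ∈ univ.filter (fun i => v i = 1), ((e i).val : ℤ)

/-- `s_v(e) = ⊕_{i ∈ supp(v)} e[i]` as an integer in {0,1}. -/
def sFun (v e : Fin n → ZMod 2) : ℤ :=
  ((∑ i ∈ univ.filter (fun i => v i = 1), e i : ZMod 2)).val

/-- The diagonal operator `CP_N(q,v)`, represented by its phase function
`e ↦ ω^{q·p_v(e)}` on computational basis states, where `ω = e^{πi/2^t}`. -/
def CP (t : ℕ) (q : ℤ) (v : Fin n → ZMod 2) : (Fin n → ZMod 2) → ℂ :=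
  fun e => Complex.exp (Real.pi * Complex.I / (2 ^ t : ℕ)) ^ (q * pFun v e)

/-- The diagonal operator `RP_N(q,v)`, represented by its phase function
`e ↦ ω^{q·s_v(e)}`. -/
def RP (t : ℕ) (q : ℤ) (v : Fin n → ZMod 2) : (Fin n → ZMod 2) → ℂ :=
  fun e => Complex.exp (Real.pi * Complex.I / (2 ^ t : ℕ)) ^ (q * sFun v e)

lemma zmod2_cases (a : ZMod 2) : a = 0 ∨ a = 1 := by fin_cases a <;> [exact Or.inl rfl; exact Or.inr rfl]

/-- characteristic vector of a finset -/
def chi (A : Finset (Fin n)) : Fin n → ZMod 2 := fun i => if i ∈ A then 1 else 0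

lemma supp_chi (A : Finset (Fin n)) : univ.filter (fun i => chi A i = 1) = A := by
  ext i; by_cases h : i ∈ A <;> simp [chi, h]

lemma aux_pow (k : ℕ) (hk : 1 ≤ k) : 2 * (-2 : ℤ) ^ (k - 1) = -(-2 : ℤ) ^ k := by
  obtain ⟨m, rfl⟩ : ∃ m, k = m + 1 := ⟨k - 1, by omega⟩
  simp only [Nat.add_sub_cancel, pow_succ]
  ring

lemma key (v e : Fin n → ZMod 2) :
    ∑ u ∈ univ.filter (fun u : Fin n → ZMod 2 => u ≠ 0 ∧ ∀ i, u i = 1 → v i = 1),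
      2 * (-2) ^ (wt u - 1) * pFun u e = 2 * sFun v e := by
  classical
  set Sv := univ.filter (fun i => v i = 1) with hSv
  set Se := univ.filter (fun i => e i = 1) with hSe
  -- step 1 : reindex by supports
  have step1 : ∑ u ∈ univ.filter (fun u : Fin n → ZMod 2 => u ≠ 0 ∧ ∀ i, u i = 1 → v i = 1),
      2 * (-2) ^ (wt u - 1) * pFun u e
      = ∑ A ∈ Sv.powerset.filter (fun A => A.Nonempty),
      2 * (-2 : ℤ) ^ (A.card - 1) * ∏ i ∈ A, ((e i).val : ℤ) := by
    refine Finset.sum_nbij' (fun u => univ.filter (fun i => u i = 1)) chi ?_ ?_ ?_ ?_ ?_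
    · intro u hu
      simp only [mem_filter, mem_univ, true_and] at hu
      simp only [mem_filter, mem_powerset, hSv]
      refine ⟨?_, ?_⟩
      · intro i hi; simp only [mem_filter, mem_univ, true_and] at hi ⊢; exact hu.2 i hi
      · by_contra hempty
        rw [Finset.not_nonempty_iff_eq_empty, Finset.filter_eq_empty_iff] at hempty
        apply hu.1; funext i
        rcases zmod2_cases (u i) with h | h
        · simpa using h
        · exact absurd h (hempty (mem_univ i))
    · intro A hA
      simp only [mem_filter, mem_powerset, hSv] at hA
      simp only [mem_filter, mem_univ, true_and]
      refine ⟨?_, ?_⟩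
      · intro h0
        obtain ⟨i, hi⟩ := hA.2
        have : chi A i = 0 := by rw [h0]; rfl
        simp [chi, hi] at this
      · intro i hi
        simp only [chi] at hi
        by_cases h : i ∈ A
        · have := hA.1 h; simp only [mem_filter] at this; exact this.2
        · simp [h] at hi
    · intro u hu
      funext i
      simp only [chi, mem_filter, mem_univ, true_and]
      rcases zmod2_cases (u i) with h | h <;> simp [h]
    · intro A hA; exact supp_chi A
    · intro u hu; rfl
  rw [step1]
  -- step 2 : product is an indicator
  have step2 : ∀ A : Finset (Fin n), (∏ i ∈ A, ((e i).val : ℤ))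
      = if A ⊆ Se then 1 else 0 := by
    intro A
    by_cases h : A ⊆ Se
    · rw [if_pos h]
      apply Finset.prod_eq_one
      intro i hi
      have := h hi; simp only [hSe, mem_filter] at this
      rw [this.2]; rfl
    · rw [if_neg h]
      obtain ⟨i, hiA, hiSe⟩ := Finset.not_subset.mp h
      apply Finset.prod_eq_zero hiA
      rcases zmod2_cases (e i) with h' | h'
      · rw [h']; rfl
      · exact absurd (by simp [hSe, h']) hiSe
  simp only [step2, mul_ite, mul_one, mul_zero]
  rw [← Finset.sum_filter]
  have hset : (Sv.powerset.filter (fun A => A.Nonempty)).filter (fun A => A ⊆ Se)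
      = (Sv ∩ Se).powerset.filter (fun A => A.Nonempty) := by
    ext A
    simp only [mem_filter, mem_powerset, Finset.subset_inter_iff]
    tauto
  rw [hset]
  -- step 3 : evaluate the alternating sum
  set S := Sv ∩ Se with hS
  have step3 : ∑ A ∈ S.powerset.filter (fun A => A.Nonempty), 2 * (-2 : ℤ) ^ (A.card - 1)
      = 1 - (-1 : ℤ) ^ S.card := by
    have h1 : ∀ A ∈ S.powerset.filter (fun A => A.Nonempty),
        2 * (-2 : ℤ) ^ (A.card - 1) = -(-2 : ℤ) ^ A.card := by
      intro A hA
      simp only [mem_filter] at hA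
      exact aux_pow A.card (Finset.card_pos.mpr hA.2)
    rw [Finset.sum_congr rfl h1]
    have hpow : ∑ A ∈ S.powerset, (-2 : ℤ) ^ A.card = (-1 : ℤ) ^ S.card := by
      have := Finset.prod_add (fun _ : Fin n => (-2 : ℤ)) (fun _ => 1) S
      simp only [prod_const, one_pow, mul_one] at this
      rw [show ((-2 : ℤ) + 1) = -1 by ring] at this
      rw [← this]
    have hsplit : S.powerset = insert ∅ (S.powerset.filter (fun A => A.Nonempty)) := by
      ext A
      simp only [mem_insert, mem_filter, mem_powerset]
      constructor
      · intro h
        rcases Finset.eq_empty_or_nonempty A with h' | h'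
        · left; exact h'
        · right; exact ⟨h, h'⟩
      · rintro (h | h)
        · subst h; exact Finset.empty_subset _
        · exact h.1
    rw [hsplit, Finset.sum_insert (by simp)] at hpow
    simp only [Finset.card_empty, pow_zero] at hpow
    have : ∑ A ∈ S.powerset.filter (fun A => A.Nonempty), (-2 : ℤ) ^ A.card
        = (-1 : ℤ) ^ S.card - 1 := by linarith
    rw [Finset.sum_neg_distrib, this]; ring
  rw [step3]
  -- step 4 : the right side
  have step4 : sFun v e = ((S.card : ℕ) % 2 : ℕ) := by
    unfold sFun
    have hsum : (∑ i ∈ Sv, e i : ZMod 2) = (S.card : ZMod 2) := by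
      have : ∀ i ∈ Sv, e i = if i ∈ Se then (1 : ZMod 2) else 0 := by
        intro i _
        rcases zmod2_cases (e i) with h | h
        · rw [h, if_neg]; simp [hSe, h]
        · rw [h, if_pos]; simp [hSe, h]
      rw [Finset.sum_congr rfl this, Finset.sum_ite_mem, ← hS]
      simp
    rw [hsum, ZMod.val_natCast]
  rw [step4]
  rcases Nat.even_or_odd S.card with h | h
  · rw [Even.neg_one_pow h]
    have : S.card % 2 = 0 := Nat.even_iff.mp h
    rw [this]; simp
  · rw [Odd.neg_one_pow h]
    have : S.card % 2 = 1 := Nat.odd_iff.mp h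
    rw [this]; ring

/-- Duality: `RP_N(2,v) = ∏_{0 ≠ u ≼ v} CP_N(2·(−2)^{wt(u)−1}, u)` for `N = 2^t`,
where the product of diagonal operators is the pointwise product of phase functions. -/
theorem RP_eq_prod_CP (t : ℕ) (ht : 1 ≤ t) (v : Fin n → ZMod 2) :
    RP t 2 v =
      ∏ u ∈ univ.filter (fun u : Fin n → ZMod 2 => u ≠ 0 ∧ ∀ i, u i = 1 → v i = 1),
        CP t (2 * (-2) ^ (wt u - 1)) u := by
  funext e
  simp only [RP, CP, Finset.prod_apply]
  set c : ℂ := Real.pi * Complex.I / (2 ^ t : ℕ) with hc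
  have hrw : ∀ m : ℤ, Complex.exp c ^ m = Complex.exp (m * c) := by
    intro m; rw [Complex.exp_int_mul]
  rw [hrw, Finset.prod_congr rfl (fun u _ => hrw _), ← Complex.exp_sum]
  congr 1
  rw [← Finset.sum_mul]
  congr 1
  exact_mod_cast (key v e).symm
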